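/- Let Q be a unital quantale, and let (X, α), (Y, β) be Q-fuzzy sets. A function f : X → Q^Y is a Goguen map (X, α) → (Q^Y, β↑) if and only if its transpose g : Y → Q^X, g(y)(x) = f(x)(y), is a Goguen map (Y, β) → (Q^X, α↑†), where β↑(λ) = ⋀_y λ(y) ⧸ β(y) and α↑†(γ) = ⋀_x α(x) ⧹ γ(x). -/

import Mathlib

/-! Both conditions say, by the residuation adjunctions of `⧸` and `⧹`, that
`α x ⊗ β y ≤ f x y` for all `x` and `y`. -/

/-- Left implication in a unital quantale: `ldd r q = r ⧸ q`. -/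
def ldd {Q : Type*} [Monoid Q] [CompleteLattice Q] (r q : Q) : Q := sSup {p | p * q ≤ r}

/-- Right implication in a unital quantale: `rdd p r = p ⧹ r`. -/
def rdd {Q : Type*} [Monoid Q] [CompleteLattice Q] (p r : Q) : Q := sSup {q | p * q ≤ r}

/-- Image of a `Q`-valued map along `f`. -/
noncomputable def fim {X Y : Type*} {Q : Type*} [CompleteLattice Q] (f : X → Y) (α : X → Q) :
    Y → Q := fun y => ⨆ x ∈ f ⁻¹' {y}, α x

section Residuation

variable {Q : Type*} [Monoid Q] [CompleteLattice Q] [IsQuantale Q]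

lemma le_ldd_iff {p q r : Q} : p ≤ ldd r q ↔ p * q ≤ r :=
  Quantale.leftMulResiduation_le_iff_mul_le

lemma le_rdd_iff {p q r : Q} : q ≤ rdd p r ↔ p * q ≤ r :=
  Quantale.rightMulResiduation_le_iff_mul_le

lemma le_iInf_ldd_iff {ι : Type*} {p : Q} {q r : ι → Q} :
    p ≤ ⨅ i, ldd (r i) (q i) ↔ ∀ i, p * q i ≤ r i := by
  simp only [le_iInf_iff, le_ldd_iff]

lemma le_iInf_rdd_iff {ι : Type*} {p r : ι → Q} {q : Q} :
    q ≤ ⨅ i, rdd (p i) (r i) ↔ ∀ i, p i * q ≤ r i := by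
  simp only [le_iInf_iff, le_rdd_iff]

end Residuation

theorem goguen_transpose_iff {X Y : Type*} {Q : Type*} [Monoid Q] [CompleteLattice Q]
    [IsQuantale Q] (α : X → Q) (β : Y → Q) (f : X → Y → Q) :
    (∀ x, α x ≤ ⨅ y, ldd (f x y) (β y)) ↔ (∀ y, β y ≤ ⨅ x, rdd (α x) (f x y)) :=
  calc (∀ x, α x ≤ ⨅ y, ldd (f x y) (β y))
      ↔ ∀ x y, α x * β y ≤ f x y := forall_congr' fun _ => le_iInf_ldd_iff
    _ ↔ ∀ y x, α x * β y ≤ f x y := forall_comm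
    _ ↔ ∀ y, β y ≤ ⨅ x, rdd (α x) (f x y) := forall_congr' fun _ => le_iInf_rdd_iff.symm
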